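/- The limit shape of the FPP model on a periodically realized crystal lattice depends only on the graph, the time distribution and the period: if (Φ,ρ) and (Φ′,ρ′) are two periodic realizations of the same d-dimensional crystal lattice X with ρ = ρ′, and the time distribution ν satisfies E[min{t₁,…,t_{l_X}}^d] < ∞, then the limit shapes coincide: B_Φ = B_{Φ′}. -/

import Mathlib

open MeasureTheory ProbabilityTheory Filter Topology Pointwise

namespace FPPCL

/-- A multigraph: loops and parallel edges allowed. Edges are unoriented,
recorded by their (unordered) pair of endpoints. -/
structure Multigraph where
  V : Type
  E : Type
  ends : E → Sym2 V

namespace Multigraph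

/-- A walk in a multigraph, recorded as a sequence of edges together with
compatible endpoints. -/
inductive Walk (G : Multigraph) : G.V → G.V → Type
  | nil (v : G.V) : Walk G v v
  | cons {u v w : G.V} (e : G.E) (h : G.ends e = s(u, v)) (p : Walk G v w) : Walk G u w

/-- The list of edges traversed by a walk. -/
def Walk.edges {G : Multigraph} : {u v : G.V} → G.Walk u v → List G.E
  | _, _, .nil _ => []
  | _, _, .cons e _ p => e :: Walk.edges p

/-- A multigraph is connected if any two vertices are joined by a walk. -/
def Connected (G : Multigraph) : Prop := ∀ x y : G.V, Nonempty (G.Walk x y)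

/-- A finite set of edges separates the graph if some pair of vertices cannot be
joined by a walk avoiding it. -/
def Separates (G : Multigraph) (S : Finset G.E) : Prop :=
  ∃ x y : G.V, ∀ p : G.Walk x y, ∃ e ∈ p.edges, e ∈ S

/-- The edge connectivity: the minimal size of a separating set of edges. -/
noncomputable def edgeConn (G : Multigraph) : ℕ :=
  sInf {n | ∃ S : Finset G.E, S.card = n ∧ G.Separates S}

end Multigraph

/-- The passage time of a walk for a configuration `t` of edge times. -/
noncomputable def walkTime {G : Multigraph} (t : G.E → NNReal) {u v : G.V}
    (p : G.Walk u v) : NNReal :=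
  (p.edges.map t).sum

/-- The first passage time between two vertices: the infimum of passage times over
all walks joining them (`∞` if there is none). -/
noncomputable def fpt {G : Multigraph} (t : G.E → NNReal) (u v : G.V) : ENNReal :=
  ⨅ p : G.Walk u v, (walkTime t p : ENNReal)

/-- A crystal structure of dimension `d` on a multigraph: a free action of the free
abelian group `ℤ^d` by graph automorphisms with finite quotient graph. -/
structure CrystalStructure (d : ℕ) (G : Multigraph) where
  vact : (Fin d → ℤ) → G.V → G.V
  eact : (Fin d → ℤ) → G.E → G.E
  vact_zero : ∀ x, vact 0 x = x
  vact_add : ∀ σ τ x, vact (σ + τ) x = vact σ (vact τ x)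
  eact_zero : ∀ e, eact 0 e = e
  eact_add : ∀ σ τ e, eact (σ + τ) e = eact σ (eact τ e)
  ends_eact : ∀ σ e, G.ends (eact σ e) = (G.ends e).map (vact σ)
  free : ∀ σ x, vact σ x = x → σ = 0
  conn : G.Connected
  finV : Finite (Quot fun x y : G.V => ∃ σ, vact σ x = y)
  finE : Finite (Quot fun e f : G.E => ∃ σ, eact σ e = f)

/-- A periodic realization of a `d`-dimensional crystal lattice: a placement of the
vertices in `ℝ^d` that is equivariant, via an injective period homomorphism `ρ` onto
a lattice group (spanned over `ℤ` by a basis of `ℝ^d`), with the crystal action. -/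
structure PeriodicRealization (d : ℕ) (G : Multigraph) (C : CrystalStructure d G) where
  Φ : G.V → EuclideanSpace ℝ (Fin d)
  basis : Module.Basis (Fin d) ℝ (EuclideanSpace ℝ (Fin d))
  periodic : ∀ σ x, Φ (C.vact σ x) = Φ x + ∑ i, (σ i : ℝ) • basis i

namespace PeriodicRealization

variable {d : ℕ} {G : Multigraph} {C : CrystalStructure d G}

/-- The period homomorphism `ρ : L → ℝ^d` of a periodic realization. -/
noncomputable def ρ (R : PeriodicRealization d G C) (σ : Fin d → ℤ) :
    EuclideanSpace ℝ (Fin d) :=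
  ∑ i, (σ i : ℝ) • R.basis i

/-- The lattice group `Γ = ρ(L)`. -/
def Γ (R : PeriodicRealization d G C) : Set (EuclideanSpace ℝ (Fin d)) :=
  Set.range R.ρ

/-- A realization is nondegenerate if it is injective on vertices. -/
def Nondegenerate (R : PeriodicRealization d G C) : Prop :=
  Function.Injective R.Φ

/-- The set `D` of rational points: points with some positive integer multiple in `Γ`. -/
def ratPoints (R : PeriodicRealization d G C) : Set (EuclideanSpace ℝ (Fin d)) :=
  {x | ∃ N : ℕ, 0 < N ∧ (N : ℝ) • x ∈ R.Γ}

/-- `v` is a realized vertex closest to the point `x`. -/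
def IsClosest (R : PeriodicRealization d G C) (x : EuclideanSpace ℝ (Fin d))
    (v : G.V) : Prop :=
  ∀ w : G.V, dist (R.Φ v) x ≤ dist (R.Φ w) x

end PeriodicRealization

/-- The `k`-th moment of the minimum of `l` i.i.d. random times with distribution `ν`. -/
noncomputable def minMoment (ν : Measure NNReal) (l k : ℕ) : ENNReal :=
  ∫⁻ f, (⨅ i : Fin l, (f i : ENNReal)) ^ k ∂(Measure.pi fun _ : Fin l => ν)

/-- The `L¹`-norm of a point of `ℝ^d`. -/
noncomputable def l1 {d : ℕ} (x : EuclideanSpace ℝ (Fin d)) : ℝ := ∑ i, |x i|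

/-- In a bond configuration `η`, the open cluster of `x` is infinite. -/
def PercolatesFrom {G : Multigraph} (η : G.E → Prop) (x : G.V) : Prop :=
  {y : G.V | ∃ p : G.Walk x y, ∀ e ∈ p.edges, η e}.Infinite

/-- The critical probability of Bernoulli bond percolation on a multigraph: the
supremum of the parameters `p` for which every i.i.d. Bernoulli(`p`) bond
configuration almost surely has no infinite cluster. -/
noncomputable def bondPc (G : Multigraph) : ℝ :=
  sSup {p : ℝ | 0 ≤ p ∧ p ≤ 1 ∧
    ∀ (Ω : Type) (_ : MeasureSpace Ω), IsProbabilityMeasure (volume : Measure Ω) →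
    ∀ η : G.E → Ω → Bool,
      iIndepFun η (volume : Measure Ω) →
      (∀ e, volume {ω | η e ω = true} = ENNReal.ofReal p) →
      volume {ω | ∃ x : G.V, PercolatesFrom (fun e => η e ω = true) x} = 0}

end FPPCL

/-! The first passage time is a pseudometric on the vertices, invariant in law under the crystal
translations, which act on the edge configuration as coordinate permutations of the i.i.d.
product measure. Since `ρ = ρ′`, both realizations have the same rational points. For such a
point `x`, the closest vertices to `n • x` in the two realizations are, up to one common
translation, drawn from a finite set of pairs, so the time between them divided by `n` tends to
zero in probability. Along an almost surely convergent subsequence the two normalized passage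
times therefore have the same limit, so `μ = μ′` on the rational points, which are dense. -/

namespace FPPCL

namespace Multigraph

variable {G : Multigraph}

def Walk.append : {u v w : G.V} → G.Walk u v → G.Walk v w → G.Walk u w
  | _, _, _, .nil _, q => q
  | _, _, _, .cons e h p, q => .cons e h (p.append q)

lemma Walk.edges_append {u v w : G.V} (p : G.Walk u v) (q : G.Walk v w) :
    (p.append q).edges = p.edges ++ q.edges := by
  induction p with
  | nil => rfl
  | cons e h p ih => simp [Walk.append, Walk.edges, ih]

def Walk.reverse : {u v : G.V} → G.Walk u v → G.Walk v u
  | _, _, .nil v => .nil v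
  | u, _, .cons e h p => p.reverse.append (.cons e (by rw [h, Sym2.eq_swap]) (.nil u))

lemma Walk.edges_reverse {u v : G.V} (p : G.Walk u v) :
    p.reverse.edges = p.edges.reverse := by
  induction p with
  | nil => rfl
  | cons e h p ih => simp [Walk.reverse, Walk.edges, Walk.edges_append, ih]

lemma Walk.edges_injective {u v : G.V} :
    Function.Injective (Walk.edges : G.Walk u v → List G.E) := by
  intro p q hpq
  induction p with
  | nil v =>
    cases q with
    | nil => rfl
    | cons e h r => simp [Walk.edges] at hpq
  | cons e h p ih =>
    cases q with
    | nil => simp [Walk.edges] at hpq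
    | cons f h' r =>
      simp only [Walk.edges, List.cons.injEq] at hpq
      obtain ⟨rfl, hq⟩ := hpq
      obtain rfl := Sym2.congr_right.mp (h.symm.trans h')
      rw [ih hq]

instance [Countable G.E] (u v : G.V) : Countable (G.Walk u v) :=
  Walk.edges_injective.countable

end Multigraph

open Multigraph

section PassageTime

variable {G : Multigraph} (t : G.E → NNReal)

lemma walkTime_append {u v w : G.V} (p : G.Walk u v) (q : G.Walk v w) :
    walkTime t (p.append q) = walkTime t p + walkTime t q := by
  simp [walkTime, Walk.edges_append]

lemma walkTime_reverse {u v : G.V} (p : G.Walk u v) : walkTime t p.reverse = walkTime t p := by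
  simp [walkTime, Walk.edges_reverse, List.map_reverse, List.sum_reverse]

lemma fpt_le_walkTime {u v : G.V} (p : G.Walk u v) : fpt t u v ≤ walkTime t p :=
  iInf_le _ p

lemma fpt_symm (u v : G.V) : fpt t u v = fpt t v u := by
  have key : ∀ u v : G.V, fpt t u v ≤ fpt t v u := fun u v =>
    le_iInf fun q => walkTime_reverse t q ▸ fpt_le_walkTime t q.reverse
  exact le_antisymm (key u v) (key v u)

lemma fpt_triangle (u v w : G.V) : fpt t u w ≤ fpt t u v + fpt t v w := by
  simp only [fpt, ENNReal.iInf_add, ENNReal.add_iInf]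
  exact le_iInf₂ fun q p => (iInf_le _ (p.append q)).trans_eq (by simp [walkTime_append])

lemma fpt_ne_top (hG : G.Connected) (u v : G.V) : fpt t u v ≠ ⊤ :=
  ne_top_of_le_ne_top ENNReal.coe_ne_top (fpt_le_walkTime t (hG u v).some)

lemma toReal_fpt_triangle (hG : G.Connected) (u v w : G.V) :
    (fpt t u w).toReal ≤ (fpt t u v).toReal + (fpt t v w).toReal := by
  rw [← ENNReal.toReal_add (fpt_ne_top t hG u v) (fpt_ne_top t hG v w)]
  exact ENNReal.toReal_mono (by simp [fpt_ne_top t hG]) (fpt_triangle t u v w)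

lemma abs_sub_toReal_fpt_le (hG : G.Connected) (a b a' b' : G.V) :
    |(fpt t a b).toReal - (fpt t a' b').toReal| ≤ (fpt t a a').toReal + (fpt t b b').toReal := by
  have h₁ := toReal_fpt_triangle t hG a a' b
  have h₂ := toReal_fpt_triangle t hG a' b' b
  have h₃ := toReal_fpt_triangle t hG a' a b'
  have h₄ := toReal_fpt_triangle t hG a b b'
  rw [fpt_symm t b' b] at h₂
  rw [fpt_symm t a' a] at h₃
  rw [abs_sub_le_iff]
  constructor <;> linarith

end PassageTime

lemma measurable_walkTime {G : Multigraph} {u v : G.V} (p : G.Walk u v) :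
    Measurable fun t : G.E → NNReal => walkTime t p := by
  unfold walkTime
  induction p.edges with
  | nil => exact measurable_const
  | cons e l ih =>
    simp only [List.map_cons, List.sum_cons]
    exact (measurable_pi_apply e).add ih

lemma measurable_fpt {G : Multigraph} [Countable G.E] (u v : G.V) :
    Measurable fun t : G.E → NNReal => fpt t u v :=
  Measurable.iInf fun p => (measurable_walkTime p).coe_nnreal_ennreal

section Translations

variable {M α : Type*} [AddGroup M] {f : M → α → α}

lemma equivalence_exists_apply_eq (h₀ : ∀ x, f 0 x = x)
    (hadd : ∀ σ τ x, f (σ + τ) x = f σ (f τ x)) :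
    Equivalence fun x y : α => ∃ σ, f σ x = y where
  refl x := ⟨0, h₀ x⟩
  symm := by
    rintro x _ ⟨σ, rfl⟩
    exact ⟨-σ, by rw [← hadd, neg_add_cancel, h₀]⟩
  trans := by
    rintro x _ _ ⟨σ, rfl⟩ ⟨τ, rfl⟩
    exact ⟨τ + σ, hadd τ σ x⟩

lemma exists_apply_quot_out_eq (h₀ : ∀ x, f 0 x = x)
    (hadd : ∀ σ τ x, f (σ + τ) x = f σ (f τ x)) (x : α) :
    ∃ σ, f σ (Quot.mk (fun x y : α => ∃ σ, f σ x = y) x).out = x :=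
  (equivalence_exists_apply_eq h₀ hadd).eqvGen_iff.mp (Quot.eq.mp (Quot.out_eq _))

lemma countable_of_finite_quot [Countable M] (h₀ : ∀ x, f 0 x = x)
    (hadd : ∀ σ τ x, f (σ + τ) x = f σ (f τ x))
    (hfin : Finite (Quot fun x y : α => ∃ σ, f σ x = y)) : Countable α := by
  refine Function.Surjective.countable
    (f := fun p : (Quot fun x y : α => ∃ σ, f σ x = y) × M => f p.2 p.1.out) fun x => ?_
  obtain ⟨σ, hσ⟩ := exists_apply_quot_out_eq h₀ hadd x
  exact ⟨(_, σ), hσ⟩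

end Translations

namespace CrystalStructure

variable {d : ℕ} {G : Multigraph} (C : CrystalStructure d G)

lemma vact_neg_vact (σ : Fin d → ℤ) (x : G.V) : C.vact (-σ) (C.vact σ x) = x := by
  rw [← C.vact_add, neg_add_cancel, C.vact_zero]

lemma eact_eact_neg (σ : Fin d → ℤ) (e : G.E) : C.eact σ (C.eact (-σ) e) = e := by
  rw [← C.eact_add, add_neg_cancel, C.eact_zero]

lemma eact_injective (σ : Fin d → ℤ) : Function.Injective (C.eact σ) := fun e f h => by
  simpa [← C.eact_add, C.eact_zero] using congrArg (C.eact (-σ)) h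

lemma countable_E (C : CrystalStructure d G) : Countable G.E :=
  countable_of_finite_quot C.eact_zero C.eact_add C.finE

def mapWalk (σ : Fin d → ℤ) : {u v : G.V} → G.Walk u v → G.Walk (C.vact σ u) (C.vact σ v)
  | _, _, .nil _ => .nil _
  | _, _, .cons e h p =>
      .cons (C.eact σ e) (by rw [C.ends_eact, h, Sym2.map_mk]) (mapWalk σ p)

lemma walkTime_mapWalk (σ : Fin d → ℤ) (t : G.E → NNReal) {u v : G.V} (p : G.Walk u v) :
    walkTime t (C.mapWalk σ p) = walkTime (t ∘ C.eact σ) p := by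
  induction p with
  | nil => rfl
  | cons e h p ih => simpa [walkTime, mapWalk, Walk.edges] using ih

lemma fpt_vact_le (σ : Fin d → ℤ) (t : G.E → NNReal) (u v : G.V) :
    fpt t (C.vact σ u) (C.vact σ v) ≤ fpt (t ∘ C.eact σ) u v :=
  le_iInf fun p => C.walkTime_mapWalk σ t p ▸ fpt_le_walkTime t (C.mapWalk σ p)

lemma fpt_vact (σ : Fin d → ℤ) (t : G.E → NNReal) (u v : G.V) :
    fpt t (C.vact σ u) (C.vact σ v) = fpt (t ∘ C.eact σ) u v := by
  refine le_antisymm (C.fpt_vact_le σ t u v) ?_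
  have h := C.fpt_vact_le (-σ) (t ∘ C.eact σ) (C.vact σ u) (C.vact σ v)
  have hid : C.eact σ ∘ C.eact (-σ) = id := funext (C.eact_eact_neg σ)
  rwa [C.vact_neg_vact, C.vact_neg_vact, Function.comp_assoc, hid, Function.comp_id] at h

end CrystalStructure

namespace PeriodicRealization

open Submodule

variable {d : ℕ} {G : Multigraph} {C : CrystalStructure d G} (R : PeriodicRealization d G C)

lemma Φ_vact (σ : Fin d → ℤ) (x : G.V) : R.Φ (C.vact σ x) = R.Φ x + R.ρ σ :=
  R.periodic σ x

lemma ρ_neg (σ : Fin d → ℤ) : R.ρ (-σ) = -R.ρ σ := by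
  simp [ρ, Finset.sum_neg_distrib]

lemma ρ_nsmul (k : ℕ) (σ : Fin d → ℤ) : R.ρ (k • σ) = (k : ℝ) • R.ρ σ := by
  simp [ρ, Finset.smul_sum, smul_smul]

lemma ρ_injective : Function.Injective R.ρ := fun σ τ h => by
  have h' := congrArg R.basis.equivFun h
  simp only [ρ, ← Module.Basis.equivFun_symm_apply, LinearEquiv.apply_symm_apply] at h'
  funext i
  exact_mod_cast congrFun h' i

lemma Γ_eq_span : R.Γ = span ℤ (Set.range R.basis) := by
  ext y
  simp [Γ, ρ, mem_span_range_iff_exists_fun, Int.cast_smul_eq_zsmul]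

lemma finite_preimage_ρ_closedBall (z : EuclideanSpace ℝ (Fin d)) (r : ℝ) :
    (R.ρ ⁻¹' Metric.closedBall z r).Finite :=
  ((ZSpan.setFinite_inter R.basis Metric.isBounded_closedBall).preimage
    R.ρ_injective.injOn).subset fun σ hσ => ⟨hσ, R.Γ_eq_span ▸ Set.mem_range_self σ⟩

lemma finite_setOf_dist_le (y : EuclideanSpace ℝ (Fin d)) (r : ℝ) :
    {v : G.V | dist (R.Φ v) y ≤ r}.Finite := by
  have := C.finV
  refine (Set.finite_iUnion fun q : Quot (fun x y : G.V => ∃ σ, C.vact σ x = y) =>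
    (R.finite_preimage_ρ_closedBall (y - R.Φ q.out) r).image
      fun σ => C.vact σ q.out).subset fun v hv => ?_
  obtain ⟨σ, hσ⟩ := exists_apply_quot_out_eq C.vact_zero C.vact_add v
  refine Set.mem_iUnion.mpr ⟨_, σ, ?_, hσ⟩
  rw [Set.mem_preimage, Metric.mem_closedBall, dist_eq_norm]
  rw [Set.mem_ofPred_eq, ← hσ, Φ_vact, dist_eq_norm] at hv
  convert hv using 2
  abel

lemma finite_setOf_isClosest (y : EuclideanSpace ℝ (Fin d)) : {v | R.IsClosest y v}.Finite := by
  rcases Set.eq_empty_or_nonempty {v | R.IsClosest y v} with h | ⟨w, hw⟩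
  · simp [h]
  · exact (R.finite_setOf_dist_le y (dist (R.Φ w) y)).subset fun v hv => hv w

lemma IsClosest.vact_neg {R : PeriodicRealization d G C} {y : EuclideanSpace ℝ (Fin d)}
    {σ : Fin d → ℤ} {v : G.V} (h : R.IsClosest (y + R.ρ σ) v) :
    R.IsClosest y (C.vact (-σ) v) := by
  have key : ∀ w, dist (R.Φ (C.vact (-σ) w)) y = dist (R.Φ w) (y + R.ρ σ) := fun w => by
    rw [Φ_vact, ρ_neg, dist_eq_norm, dist_eq_norm]
    congr 1
    abel
  intro w
  have hw := key (C.vact σ w)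
  rw [C.vact_neg_vact] at hw
  rw [key v, hw]
  exact h _

lemma nsmul_eq_mod_add_ρ {N : ℕ} {x : EuclideanSpace ℝ (Fin d)} {σ : Fin d → ℤ}
    (hx : (N : ℝ) • x = R.ρ σ) (n : ℕ) :
    (n : ℝ) • x = ((n % N : ℕ) : ℝ) • x + R.ρ ((n / N) • σ) := by
  rw [ρ_nsmul, ← hx, smul_smul, ← add_smul]
  congr 1
  exact_mod_cast (Nat.mod_add_div' n N).symm

/-- The finite set is that of the vertices closest to `r • x` for some `r < N`. -/
lemma exists_finite_vact_neg_mem_of_isClosest {N : ℕ} (hN : 0 < N)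
    {x : EuclideanSpace ℝ (Fin d)} {σ : Fin d → ℤ} (hx : (N : ℝ) • x = R.ρ σ) :
    ∃ S : Set G.V, S.Finite ∧
      ∀ n : ℕ, ∀ v, R.IsClosest ((n : ℝ) • x) v → C.vact (-((n / N) • σ)) v ∈ S := by
  refine ⟨⋃ r ∈ Finset.range N, {v | R.IsClosest ((r : ℝ) • x) v},
    (Finset.range N).finite_toSet.biUnion fun r _ => R.finite_setOf_isClosest _,
    fun n v hv => Set.mem_biUnion (Finset.mem_range.mpr (Nat.mod_lt n hN)) ?_⟩
  rw [R.nsmul_eq_mod_add_ρ hx n] at hv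
  exact hv.vact_neg

lemma ratPoints_eq_of_ρ_eq {R R' : PeriodicRealization d G C} (h : R.ρ = R'.ρ) :
    R.ratPoints = R'.ratPoints := by
  simp only [ratPoints, Γ, h]

/-- `(1/n) ⌊n y⌋` in the coordinates of the basis approximates `y` within `(∑ ‖bᵢ‖) / n`. -/
lemma dense_ratPoints : Dense R.ratPoints := by
  intro y
  set z : ℕ → EuclideanSpace ℝ (Fin d) :=
    fun n => (n : ℝ)⁻¹ • (ZSpan.floor R.basis ((n : ℝ) • y) : EuclideanSpace ℝ (Fin d))
  have hz : ∀ n, 0 < n → z n ∈ R.ratPoints := fun n hn =>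
    ⟨n, hn, by rw [smul_inv_smul₀ (by positivity), Γ_eq_span]; exact SetLike.coe_mem _⟩
  have hdist : ∀ n, 0 < n → ‖z n - y‖ ≤ (∑ i, ‖R.basis i‖) / n := fun n hn => by
    have hn' : (n : ℝ) ≠ 0 := by positivity
    have : z n - y = -((n : ℝ)⁻¹ • ZSpan.fract R.basis ((n : ℝ) • y)) := by
      simp only [z, ZSpan.fract_apply, smul_sub, inv_smul_smul₀ hn']
      abel
    rw [this, norm_neg, norm_smul, norm_inv, RCLike.norm_natCast, inv_mul_le_iff₀ (by positivity),
      mul_div_cancel₀ _ hn']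
    exact ZSpan.norm_fract_le R.basis _
  refine mem_closure_of_tendsto (f := z) ?_ ((eventually_gt_atTop 0).mono hz)
  refine tendsto_iff_norm_sub_tendsto_zero.mpr (squeeze_zero' (Eventually.of_forall fun _ =>
    norm_nonneg _) ((eventually_gt_atTop 0).mono hdist) ?_)
  exact tendsto_const_div_atTop_nhds_zero_nat _

end PeriodicRealization

open Measure

lemma ae_infinitePi_of_iIndepFun {E Ω β : Type*} {_ : MeasurableSpace Ω} [MeasurableSpace β]
    {P : Measure Ω} {ν : Measure β} [IsProbabilityMeasure ν] {X : E → Ω → β}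
    (hX : ∀ e, Measurable (X e)) (hindep : iIndepFun X P) (hident : ∀ e, P.map (X e) = ν)
    {p : (E → β) → Prop} (hp : MeasurableSet {t | p t}) (h : ∀ᵐ ω ∂P, p fun e => X e ω) :
    ∀ᵐ t ∂infinitePi fun _ : E => ν, p t := by
  have hlaw := hindep.map_fun_eq_infinitePi_map hX
  simp only [hident] at hlaw
  rwa [← hlaw, ae_map_iff (measurable_pi_lambda _ hX).aemeasurable hp]

lemma tendstoInMeasure_toReal_div_iff {α : Type*} {_ : MeasurableSpace α} (P : Measure α)
    (F : ℕ → α → ENNReal) :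
    TendstoInMeasure P (fun n t => (F n t).toReal / n) atTop 0 ↔
      ∀ ε, 0 < ε → Tendsto (fun n : ℕ => P {t | ε ≤ (F n t).toReal / n}) atTop (𝓝 0) := by
  simp only [tendstoInMeasure_iff_dist, Pi.zero_apply, dist_zero_right, Real.norm_eq_abs,
    abs_div, ENNReal.abs_toReal, Nat.abs_cast]

section FirstPassagePercolation

variable {d : ℕ} {G : Multigraph} (C : CrystalStructure d G) (ν : Measure NNReal)
  [IsProbabilityMeasure ν]

lemma measure_fpt_vact_mem_le (σ : Fin d → ℤ) (u v : G.V) (S : Set ENNReal) :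
    infinitePi (fun _ : G.E => ν) {t | fpt t (C.vact σ u) (C.vact σ v) ∈ S}
      ≤ infinitePi (fun _ : G.E => ν) {t | fpt t u v ∈ S} := by
  have hinv : (infinitePi fun _ : G.E => ν).map (fun t e => t (C.eact σ e))
      = infinitePi fun _ : G.E => ν :=
    map_infinitePi_infinitePi_of_inj (C.eact_injective σ)
  calc _ = infinitePi (fun _ : G.E => ν)
          ((fun t e => t (C.eact σ e)) ⁻¹' {t | fpt t u v ∈ S}) := by
        simp only [C.fpt_vact]
        rfl
    _ ≤ (infinitePi fun _ : G.E => ν).map (fun t e => t (C.eact σ e)) {t | fpt t u v ∈ S} :=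
        le_map_apply (measurable_pi_lambda _ fun e => measurable_pi_apply _).aemeasurable _
    _ = _ := by rw [hinv]

lemma tendstoInMeasure_fpt_div {a b : ℕ → G.V} {T : Set (G.V × G.V)} (hT : T.Finite)
    (hab : ∀ n, ∃ σ, (C.vact σ (a n), C.vact σ (b n)) ∈ T) :
    TendstoInMeasure (infinitePi fun _ : G.E => ν)
      (fun n t => (fpt t (a n) (b n)).toReal / n) atTop 0 := by
  have := C.countable_E
  rw [tendstoInMeasure_toReal_div_iff]
  intro ε hε
  have htail : ∀ p ∈ hT.toFinset, Tendsto (fun n : ℕ => infinitePi (fun _ : G.E => ν)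
      {t | ε ≤ (fpt t p.1 p.2).toReal / n}) atTop (𝓝 0) := fun p _ =>
    (tendstoInMeasure_toReal_div_iff _ _).mp (tendstoInMeasure_of_tendsto_ae
      (fun n => ((measurable_fpt p.1 p.2).ennreal_toReal.div_const (n : ℝ)).aestronglyMeasurable)
      (ae_of_all _ fun t => tendsto_const_div_atTop_nhds_zero_nat (fpt t p.1 p.2).toReal)) ε hε
  refine tendsto_of_tendsto_of_tendsto_of_le_of_le tendsto_const_nhds
    (by simpa using tendsto_finsetSum _ htail) (fun _ => zero_le) fun n => ?_
  obtain ⟨σ, hσ⟩ := hab n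
  have key := measure_fpt_vact_mem_le C ν (-σ) (C.vact σ (a n)) (C.vact σ (b n))
    {x | ε ≤ x.toReal / n}
  rw [C.vact_neg_vact, C.vact_neg_vact] at key
  exact key.trans (Finset.single_le_sum (f := fun p : G.V × G.V => infinitePi (fun _ : G.E => ν)
    {t | ε ≤ (fpt t p.1 p.2).toReal / n}) (fun _ _ => zero_le) (hT.mem_toFinset.mpr hσ))

lemma eq_of_tendsto_of_abs_sub_le {ι : Type*} {l : Filter ι} [l.NeBot] {a b e : ι → ℝ}
    {α β : ℝ} (ha : Tendsto a l (𝓝 α)) (hb : Tendsto b l (𝓝 β)) (he : Tendsto e l (𝓝 0))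
    (hab : ∀ n, |a n - b n| ≤ e n) : α = β :=
  sub_eq_zero.mp (tendsto_nhds_unique (ha.sub hb) (squeeze_zero_norm hab he))

lemma timeConstant_eq_of_mem_ratPoints {R R' : PeriodicRealization d G C} (hρ : R.ρ = R'.ρ)
    {c c' : EuclideanSpace ℝ (Fin d) → G.V} (hc : ∀ p, R.IsClosest p (c p))
    (hc' : ∀ p, R'.IsClosest p (c' p)) {x : EuclideanSpace ℝ (Fin d)} (hx : x ∈ R.ratPoints)
    {α β : ℝ}
    (hα : ∀ᵐ t ∂infinitePi (fun _ : G.E => ν),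
      Tendsto (fun n : ℕ => (fpt t (c 0) (c ((n : ℝ) • x))).toReal / n) atTop (𝓝 α))
    (hβ : ∀ᵐ t ∂infinitePi (fun _ : G.E => ν),
      Tendsto (fun n : ℕ => (fpt t (c' 0) (c' ((n : ℝ) • x))).toReal / n) atTop (𝓝 β)) :
    α = β := by
  obtain ⟨N, hN, σ, hσ⟩ := hx
  obtain ⟨S, hS, hcS⟩ := R.exists_finite_vact_neg_mem_of_isClosest hN hσ.symm
  obtain ⟨S', hS', hcS'⟩ := R'.exists_finite_vact_neg_mem_of_isClosest hN (hρ ▸ hσ.symm)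
  have hD := tendstoInMeasure_fpt_div C ν (a := fun n => c ((n : ℝ) • x))
    (b := fun n => c' ((n : ℝ) • x)) (hS.prod hS')
    fun n => ⟨_, hcS n _ (hc _), hcS' n _ (hc' _)⟩
  obtain ⟨ns, hns, hDns⟩ := hD.exists_seq_tendsto_ae
  obtain ⟨t, htα, htβ, htD⟩ := (hα.and (hβ.and hDns)).exists
  refine eq_of_tendsto_of_abs_sub_le (htα.comp hns.tendsto_atTop) (htβ.comp hns.tendsto_atTop)
    (by simpa using ((tendsto_const_div_atTop_nhds_zero_nat
      (fpt t (c 0) (c' 0)).toReal).comp hns.tendsto_atTop).add htD) fun k => ?_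
  simp only [Function.comp_apply, ← sub_div, ← add_div, abs_div, Nat.abs_cast]
  gcongr
  exact abs_sub_toReal_fpt_le t C.conn _ _ _ _

end FirstPassagePercolation

theorem limit_shape_depends_only_on_period_general
    {d : ℕ} (G : Multigraph) (C : CrystalStructure d G)
    (R R' : PeriodicRealization d G C) (hρ : R.ρ = R'.ρ)
    {Ω : Type} [MeasureSpace Ω]
    {Ω' : Type} [MeasureSpace Ω']
    (ν : Measure NNReal) [IsProbabilityMeasure ν]
    (te : G.E → Ω → NNReal) (hmeas : ∀ e, Measurable (te e))
    (hindep : iIndepFun te (volume : Measure Ω))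
    (hident : ∀ e, Measure.map (te e) (volume : Measure Ω) = ν)
    (te' : G.E → Ω' → NNReal) (hmeas' : ∀ e, Measurable (te' e))
    (hindep' : iIndepFun te' (volume : Measure Ω'))
    (hident' : ∀ e, Measure.map (te' e) (volume : Measure Ω') = ν)
    (c : EuclideanSpace ℝ (Fin d) → G.V) (hc : ∀ p, R.IsClosest p (c p))
    (c' : EuclideanSpace ℝ (Fin d) → G.V) (hc' : ∀ p, R'.IsClosest p (c' p))
    (μ μ' : EuclideanSpace ℝ (Fin d) → ℝ)
    (hμcont : Continuous μ) (hμcont' : Continuous μ')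
    (hμ : ∀ x ∈ R.ratPoints,
      ∀ᵐ ω ∂(volume : Measure Ω),
        Tendsto
          (fun n : ℕ => (fpt (fun e => te e ω) (c 0) (c ((n : ℝ) • x))).toReal / n)
          atTop (𝓝 (μ x)))
    (hμ' : ∀ x ∈ R'.ratPoints,
      ∀ᵐ ω ∂(volume : Measure Ω'),
        Tendsto
          (fun n : ℕ => (fpt (fun e => te' e ω) (c' 0) (c' ((n : ℝ) • x))).toReal / n)
          atTop (𝓝 (μ' x))) :
    {x : EuclideanSpace ℝ (Fin d) | μ x ≤ 1} = {x : EuclideanSpace ℝ (Fin d) | μ' x ≤ 1} := by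
  have := C.countable_E
  have hmeasSet : ∀ (c : EuclideanSpace ℝ (Fin d) → G.V) x α, MeasurableSet
      {t : G.E → NNReal | Tendsto (fun n : ℕ => (fpt t (c 0) (c ((n : ℝ) • x))).toReal / n)
        atTop (𝓝 α)} := fun c x α =>
    measurableSet_tendsto _ fun n => ((measurable_fpt _ _).ennreal_toReal).div_const _
  have hrat : ∀ x ∈ R.ratPoints, μ x = μ' x := fun x hx =>
    timeConstant_eq_of_mem_ratPoints C ν hρ hc hc' hx
      (ae_infinitePi_of_iIndepFun hmeas hindep hident (hmeasSet c x _) (hμ x hx))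
      (ae_infinitePi_of_iIndepFun hmeas' hindep' hident' (hmeasSet c' x _)
        (hμ' x (PeriodicRealization.ratPoints_eq_of_ρ_eq hρ ▸ hx)))
  rw [hμcont.ext_on R.dense_ratPoints hμcont' hrat]

/-- the limit shape depends only on the graph, the time
distribution and the period: if `(Φ,ρ)` and `(Φ′,ρ′)` are periodic realizations of
the same crystal lattice with `ρ = ρ′`, and `E[min{t₁,…,t_{l_X}}^d] < ∞`, then the
limit shapes coincide: `B_Φ = B_{Φ′}`. -/
theorem limit_shape_depends_only_on_period
    {d : ℕ} (G : Multigraph) (C : CrystalStructure d G)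
    (R R' : PeriodicRealization d G C) (hρ : R.ρ = R'.ρ)
    (hnd : R.Nondegenerate) (hnd' : R'.Nondegenerate)
    (v₀ : G.V) (hv₀ : R.Φ v₀ = 0) (v₀' : G.V) (hv₀' : R'.Φ v₀' = 0)
    {Ω : Type} [MeasureSpace Ω] [IsProbabilityMeasure (volume : Measure Ω)]
    {Ω' : Type} [MeasureSpace Ω'] [IsProbabilityMeasure (volume : Measure Ω')]
    (ν : Measure NNReal) [IsProbabilityMeasure ν]
    (te : G.E → Ω → NNReal) (hmeas : ∀ e, Measurable (te e))
    (hindep : iIndepFun te (volume : Measure Ω))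
    (hident : ∀ e, Measure.map (te e) (volume : Measure Ω) = ν)
    (te' : G.E → Ω' → NNReal) (hmeas' : ∀ e, Measurable (te' e))
    (hindep' : iIndepFun te' (volume : Measure Ω'))
    (hident' : ∀ e, Measure.map (te' e) (volume : Measure Ω') = ν)
    (hmom : minMoment ν G.edgeConn d < ⊤)
    (c : EuclideanSpace ℝ (Fin d) → G.V) (hc : ∀ p, R.IsClosest p (c p))
    (c' : EuclideanSpace ℝ (Fin d) → G.V) (hc' : ∀ p, R'.IsClosest p (c' p))
    (μ μ' : EuclideanSpace ℝ (Fin d) → ℝ)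
    (hμcont : Continuous μ) (hμcont' : Continuous μ')
    (hμ : ∀ x ∈ R.ratPoints,
      ∀ᵐ ω ∂(volume : Measure Ω),
        Tendsto
          (fun n : ℕ => (fpt (fun e => te e ω) (c 0) (c ((n : ℝ) • x))).toReal / n)
          atTop (𝓝 (μ x)))
    (hμ' : ∀ x ∈ R'.ratPoints,
      ∀ᵐ ω ∂(volume : Measure Ω'),
        Tendsto
          (fun n : ℕ => (fpt (fun e => te' e ω) (c' 0) (c' ((n : ℝ) • x))).toReal / n)
          atTop (𝓝 (μ' x))) :
    {x : EuclideanSpace ℝ (Fin d) | μ x ≤ 1} = {x : EuclideanSpace ℝ (Fin d) | μ' x ≤ 1} :=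
  limit_shape_depends_only_on_period_general G C R R' hρ ν te hmeas hindep hident te' hmeas' hindep'
    hident' c hc c' hc' μ μ' hμcont hμcont' hμ hμ'

end FPPCL
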